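/- arXiv:2112.12270 — 7 statements merged into one kernel-verified Lean document; each statement's English description precedes it below -/
import Mathlib

section
/- The single-target imaging functional admits the exact closed form F_ε(y) = (1/|ρ₀|) · (1/N) Σ_{n=1}^{N} [ (1/ε − (1/ε − 1)|Φ_n(y)|²) · |x_n − y₀|²/|x_n − y|² ], where Φ_n(y) = (1/M) Σ_{m=1}^{M} e^{iω_m Δτ_n(y)} and Δτ_n(y) = 2(|x_n − y| − |x_n − y₀|)/c. -/
/-!
With `P = u uᴴ`, the quadratic form `aᴴ (P + ε⁻¹ (1 - P)) a` equals
`|uᴴ a|² + ε⁻¹ (‖a‖² - |uᴴ a|²)`. For the phase vectors of a single target, `uᴴ a` is a unimodular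
constant times `Σ_m e^{i ω_m Δτ} / (√M · 4π|x - y|) = √M Φ / (4π|x - y|)`, and
`‖a‖² = M / (4π|x - y|)²`; the prefactor `(4π|x - y₀|)² / (M |ρ₀|)` then leaves the closed form.
-/

open Real Matrix ComplexConjugate

section RankOne
variable {𝕜 ι : Type*} [RCLike 𝕜] [Fintype ι]

theorem dotProduct_star_vecMulVec_mulVec (u a : ι → 𝕜) :
    star a ⬝ᵥ (vecMulVec u (star u) *ᵥ a) = (‖star u ⬝ᵥ a‖ : 𝕜) ^ 2 := by
  rw [vecMulVec_mulVec, op_smul_eq_smul, dotProduct_smul, star_dotProduct a, smul_eq_mul, mul_comm]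
  exact RCLike.conj_mul (K := 𝕜) _

theorem dotProduct_star_self_eq_sum_norm_sq (a : ι → 𝕜) :
    star a ⬝ᵥ a = ∑ i, (‖a i‖ : 𝕜) ^ 2 :=
  Finset.sum_congr rfl fun i _ => RCLike.conj_mul (a i)

theorem dotProduct_star_smul_projection_mulVec [DecidableEq ι] (σ e : 𝕜) (u a : ι → 𝕜) :
    star a ⬝ᵥ ((σ • (vecMulVec u (star u) + e • (1 - vecMulVec u (star u)))) *ᵥ a)
      = σ * ((‖star u ⬝ᵥ a‖ : 𝕜) ^ 2
        + e * (∑ i, (‖a i‖ : 𝕜) ^ 2 - (‖star u ⬝ᵥ a‖ : 𝕜) ^ 2)) := by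
  rw [smul_mulVec, add_mulVec, smul_mulVec, sub_mulVec, one_mulVec, dotProduct_smul,
    dotProduct_add, dotProduct_smul, dotProduct_sub, dotProduct_star_vecMulVec_mulVec,
    dotProduct_star_self_eq_sum_norm_sq, smul_eq_mul, smul_eq_mul]

end RankOne

open Complex in
theorem star_dotProduct_phase_vectors {ι : Type*} [Fintype ι] (β α : ℂ) (s t : ι → ℝ) :
    star (fun i => β * exp (I * s i)) ⬝ᵥ (fun i => exp (I * t i) / α)
      = star β / α * ∑ i, exp (I * (t i - s i)) := by
  simp only [dotProduct, Finset.mul_sum, Pi.star_apply, star_mul', star_def, ← exp_conj, map_mul,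
    conj_I, conj_ofReal]
  refine Finset.sum_congr rfl fun i _ => ?_
  rw [neg_mul, mul_sub, sub_eq_neg_add, Complex.exp_add]
  ring

open Complex in
theorem single_target_quadratic_form {M : ℕ} (hM : M ≠ 0) (c θ₀ ε ρ r r₀ τ : ℝ) (hr : 0 ≤ r)
    (hτ : τ = 2 * (r - r₀) / c) (ω : ℕ → ℝ) (u a : Fin M → ℂ)
    (hu : ∀ m : Fin M, u m = exp (I * (θ₀ / 2)) / (√M : ℂ) * exp (I * (2 * ω m * r₀ / c)))
    (ha : ∀ m : Fin M, a m = exp (I * (2 * ω m * r / c)) / ((4 * π * r : ℝ) : ℂ)) :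
    star a ⬝ᵥ (((((4 * π * r₀) ^ 2 / (M * ρ) : ℝ) : ℂ) • (vecMulVec u (star u)
        + ((ε⁻¹ : ℝ) : ℂ) • (1 - vecMulVec u (star u)))) *ᵥ a)
      = ((1 / ρ * ((1 / ε - (1 / ε - 1)
          * ‖(1 / (M : ℂ)) * ∑ m : Fin M, exp (I * (ω m * τ))‖ ^ 2)
          * (r₀ ^ 2 / r ^ 2)) : ℝ) : ℂ) := by
  have hMC : (M : ℂ) ≠ 0 := Nat.cast_ne_zero.mpr hM
  set Φ : ℂ := (1 / (M : ℂ)) * ∑ m : Fin M, exp (I * (ω m * τ)) with hΦ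
  have hu' : u = fun m : Fin M =>
      exp (I * (θ₀ / 2 : ℝ)) / (√M : ℂ) * exp (I * (2 * ω m * r₀ / c : ℝ)) :=
    funext fun m => by rw [hu]; push_cast; rfl
  have ha' : a = fun m : Fin M => exp (I * (2 * ω m * r / c : ℝ)) / ((4 * π * r : ℝ) : ℂ) :=
    funext fun m => by rw [ha]; push_cast; rfl
  have hnorm_a : ∀ m, ‖a m‖ = (4 * π * r)⁻¹ := fun m => by
    rw [ha', norm_div, norm_exp_I_mul_ofReal, norm_real, norm_of_nonneg (by positivity), one_div]
  have hdot : star u ⬝ᵥ a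
      = star (exp (I * (θ₀ / 2 : ℝ)) / (√M : ℂ)) / ((4 * π * r : ℝ) : ℂ) * (M * Φ) := by
    rw [hu', ha', star_dotProduct_phase_vectors, hΦ, one_div, mul_inv_cancel_left₀ hMC]
    congr 1
    refine Finset.sum_congr rfl fun m _ => ?_
    rw [hτ]
    push_cast
    ring_nf
  have hnorm_dot : ‖star u ⬝ᵥ a‖ ^ 2 = M * ‖Φ‖ ^ 2 / (4 * π * r) ^ 2 := by
    simp only [hdot, norm_mul, norm_div, star_def, norm_conj, norm_exp_I_mul_ofReal, norm_real,
      Complex.norm_natCast, norm_of_nonneg (sqrt_nonneg _),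
      norm_of_nonneg (by positivity : 0 ≤ 4 * π * r)]
    rw [mul_pow, div_pow, div_pow, one_pow, sq_sqrt M.cast_nonneg]
    field_simp
  have hπ : (π : ℂ) ≠ 0 := ofReal_ne_zero.mpr pi_ne_zero
  rw [dotProduct_star_smul_projection_mulVec, RCLike.ofReal_eq_complex_ofReal, ← ofReal_pow,
    hnorm_dot]
  simp only [hnorm_a, Finset.sum_const, Finset.card_univ, Fintype.card_fin, nsmul_eq_mul]
  push_cast
  field_simp
  ring

theorem imaging_functional_closed_form_general
    (M N : ℕ) (hM : 1 ≤ M)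
    (c θ₀ ε : ℝ)
    (ω : ℕ → ℝ)
    (x : Fin N → EuclideanSpace ℝ (Fin 3)) (y₀ y : EuclideanSpace ℝ (Fin 3))
    (ρ₀ : ℂ)
    (u : Fin N → Fin M → ℂ)
    (hu : ∀ n (m : Fin M), u n m = Complex.exp (Complex.I * (θ₀ / 2)) / (Real.sqrt M : ℂ)
      * Complex.exp (Complex.I * (2 * ω m.val * ‖x n - y₀‖ / c)))
    (a : Fin N → Fin M → ℂ)
    (ha : ∀ n (m : Fin M), a n m =
      Complex.exp (Complex.I * (2 * ω m.val * ‖x n - y‖ / c)) / ((4 * π * ‖x n - y‖ : ℝ) : ℂ))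
    (Mn : Fin N → Matrix (Fin M) (Fin M) ℂ)
    (hMn : ∀ n, Mn n = (((4 * π * ‖x n - y₀‖) ^ 2 / (M * ‖ρ₀‖) : ℝ) : ℂ)
      • (Matrix.vecMulVec (u n) (fun m => (starRingEnd ℂ) (u n m))
        + ((ε⁻¹ : ℝ) : ℂ) • ((1 : Matrix (Fin M) (Fin M) ℂ)
          - Matrix.vecMulVec (u n) (fun m => (starRingEnd ℂ) (u n m)))))
    (Δτ : Fin N → ℝ) (hΔτ : ∀ n, Δτ n = 2 * (‖x n - y‖ - ‖x n - y₀‖) / c)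
    (Φ : Fin N → ℂ)
    (hΦ : ∀ n, Φ n = (1 / (M : ℂ)) * ∑ m : Fin M, Complex.exp (Complex.I * (ω m.val * Δτ n)))
    (F : ℂ)
    (hF : F = (1 / (N : ℂ)) * ∑ n : Fin N,
      dotProduct (fun m => (starRingEnd ℂ) (a n m)) ((Mn n).mulVec (a n))) :
    F = (((1 / ‖ρ₀‖) * ((1 : ℝ) / N) * ∑ n : Fin N,
      ((1 / ε - (1 / ε - 1) * ‖Φ n‖ ^ 2)
        * (‖x n - y₀‖ ^ 2 / ‖x n - y‖ ^ 2)) : ℝ) : ℂ) := by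
  have hterm : ∀ n, dotProduct (fun m => (starRingEnd ℂ) (a n m)) ((Mn n).mulVec (a n))
      = ((1 / ‖ρ₀‖ * ((1 / ε - (1 / ε - 1) * ‖Φ n‖ ^ 2)
        * (‖x n - y₀‖ ^ 2 / ‖x n - y‖ ^ 2)) : ℝ) : ℂ) := fun n => by
    rw [hMn n, hΦ n, show (fun m => (starRingEnd ℂ) (u n m)) = star (u n) from rfl,
      show (fun m => (starRingEnd ℂ) (a n m)) = star (a n) from rfl]
    exact single_target_quadratic_form (by omega) c θ₀ ε ‖ρ₀‖ _ _ _ (norm_nonneg _) (hΔτ n) ω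
      (u n) (a n) (hu n) (ha n)
  rw [hF, Finset.sum_congr rfl fun n _ => hterm n]
  push_cast
  rw [← Finset.mul_sum]
  ring

/-- Closed form for the single-target imaging functional:
`F_ε(y) = (1/|ρ₀|) (1/N) Σ_n [ (1/ε − (1/ε − 1)|Φ_n|²) · |x_n − y₀|²/|x_n − y|² ]`,
where `Φ_n = (1/M) Σ_m e^{iω_m Δτ_n}` and `Δτ_n = 2(|x_n − y| − |x_n − y₀|)/c`.
Indices are 0-based: `ω m = ω₁ + m Δω` for `m = 0, …, M-1`. -/
theorem imaging_functional_closed_form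
    (M N : ℕ) (hM : 1 ≤ M) (hN : 1 ≤ N)
    (c ω₁ Δω θ₀ ε : ℝ) (hc : 0 < c) (hε : 0 < ε)
    (ω : ℕ → ℝ) (hω : ∀ m, ω m = ω₁ + m * Δω)
    (x : Fin N → EuclideanSpace ℝ (Fin 3)) (y₀ y : EuclideanSpace ℝ (Fin 3))
    (hxy₀ : ∀ n, x n ≠ y₀) (hxy : ∀ n, x n ≠ y)
    (ρ₀ : ℂ) (hρ₀ : ρ₀ ≠ 0)
    (hρ : ρ₀ = (‖ρ₀‖ : ℂ) * Complex.exp (θ₀ * Complex.I))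
    (u : Fin N → Fin M → ℂ)
    (hu : ∀ n (m : Fin M), u n m = Complex.exp (Complex.I * (θ₀ / 2)) / (Real.sqrt M : ℂ)
      * Complex.exp (Complex.I * (2 * ω m.val * ‖x n - y₀‖ / c)))
    (a : Fin N → Fin M → ℂ)
    (ha : ∀ n (m : Fin M), a n m =
      Complex.exp (Complex.I * (2 * ω m.val * ‖x n - y‖ / c)) / ((4 * π * ‖x n - y‖ : ℝ) : ℂ))
    (Mn : Fin N → Matrix (Fin M) (Fin M) ℂ)
    (hMn : ∀ n, Mn n = (((4 * π * ‖x n - y₀‖) ^ 2 / (M * ‖ρ₀‖) : ℝ) : ℂ)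
      • (Matrix.vecMulVec (u n) (fun m => (starRingEnd ℂ) (u n m))
        + ((ε⁻¹ : ℝ) : ℂ) • ((1 : Matrix (Fin M) (Fin M) ℂ)
          - Matrix.vecMulVec (u n) (fun m => (starRingEnd ℂ) (u n m)))))
    (Δτ : Fin N → ℝ) (hΔτ : ∀ n, Δτ n = 2 * (‖x n - y‖ - ‖x n - y₀‖) / c)
    (Φ : Fin N → ℂ)
    (hΦ : ∀ n, Φ n = (1 / (M : ℂ)) * ∑ m : Fin M, Complex.exp (Complex.I * (ω m.val * Δτ n)))
    (F : ℂ)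
    (hF : F = (1 / (N : ℂ)) * ∑ n : Fin N,
      dotProduct (fun m => (starRingEnd ℂ) (a n m)) ((Mn n).mulVec (a n))) :
    F = (((1 / ‖ρ₀‖) * ((1 : ℝ) / N) * ∑ n : Fin N,
      ((1 / ε - (1 / ε - 1) * ‖Φ n‖ ^ 2)
        * (‖x n - y₀‖ ^ 2 / ‖x n - y‖ ^ 2)) : ℝ) : ℂ) :=
  imaging_functional_closed_form_general M N hM c θ₀ ε ω x y₀ y ρ₀ u hu a ha Mn hMn Δτ hΔτ Φ hΦ F hF
end

section
/- Evaluated at the true target location, the single-target imaging functional satisfies F_ε(y₀) = 1/|ρ₀|, and hence 1/F_ε(y₀) = |ρ₀|. -/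
/-!
At the target, `u₀⁽ⁿ⁾` is a unit vector and `a_n(y₀)` is a scalar multiple of it, so `a_n(y₀)` is
fixed by the projector `u₀⁽ⁿ⁾ u₀⁽ⁿ⁾*` and killed by its complement: the `ε⁻¹` term drops out and
each receiver contributes `‖a_n(y₀)‖² / σ₀⁽ⁿ⁾ = M/(4πr_n)² · (4πr_n)²/(M|ρ₀|) = 1/|ρ₀|`,
independently of `n`, `ε`, the phases and the frequencies.
-/

open Real Matrix

namespace Matrix

variable {ι R 𝕜 : Type*} [Fintype ι]

theorem mulVec_smul_add_smul_one_sub_of_mulVec_eq [DecidableEq ι] [CommRing R]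
    {P : Matrix ι ι R} {v : ι → R} (hv : P *ᵥ v = v) (s t : R) :
    (s • (P + t • (1 - P))) *ᵥ v = s • v := by
  simp [smul_mulVec, add_mulVec, sub_mulVec, hv]

theorem vecMulVec_star_mulVec_smul_self [CommRing R] [StarRing R] {u : ι → R}
    (hu : star u ⬝ᵥ u = 1) (κ : R) :
    vecMulVec u (star u) *ᵥ (κ • u) = κ • u := by
  rw [vecMulVec_mulVec, dotProduct_smul, hu, smul_eq_mul, mul_one, op_smul_eq_smul]

variable [RCLike 𝕜] {e : ι → 𝕜}

theorem dotProduct_star_self_of_forall_norm_eq_one (he : ∀ i, ‖e i‖ = 1) :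
    star e ⬝ᵥ e = Fintype.card ι := by
  simp [dotProduct, RCLike.conj_mul, he]

theorem star_smul_dotProduct_smul_of_forall_norm_eq_one (he : ∀ i, ‖e i‖ = 1) (α β : 𝕜) :
    star (α • e) ⬝ᵥ (β • e) = star α * β * Fintype.card ι := by
  rw [star_smul, smul_dotProduct, dotProduct_smul, dotProduct_star_self_of_forall_norm_eq_one he,
    smul_eq_mul, smul_eq_mul, mul_assoc]

theorem star_smul_dotProduct_mulVec_smul_of_forall_norm_eq_one [DecidableEq ι]
    (he : ∀ i, ‖e i‖ = 1) {α : 𝕜} (hα : ‖α‖ ^ 2 * Fintype.card ι = 1) (β s t : 𝕜) :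
    star (β • e) ⬝ᵥ ((s • (vecMulVec (α • e) (star (α • e))
        + t • (1 - vecMulVec (α • e) (star (α • e))))) *ᵥ (β • e))
      = s * ((‖β‖ ^ 2 * Fintype.card ι : ℝ) : 𝕜) := by
  have hα0 : α ≠ 0 := by rintro rfl; simp at hα
  have hu : star (α • e) ⬝ᵥ (α • e) = 1 := by
    rw [star_smul_dotProduct_smul_of_forall_norm_eq_one he, RCLike.star_def, RCLike.conj_mul]
    exact_mod_cast hα
  have hβ : β • e = (β / α) • (α • e) := by rw [smul_smul, div_mul_cancel₀ _ hα0]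
  rw [hβ, mulVec_smul_add_smul_one_sub_of_mulVec_eq (vecMulVec_star_mulVec_smul_self hu _), ← hβ,
    dotProduct_smul, star_smul_dotProduct_smul_of_forall_norm_eq_one he, RCLike.star_def,
    RCLike.conj_mul, smul_eq_mul]
  push_cast
  ring

end Matrix

theorem quadForm_illumination_at_target {ι : Type*} [Fintype ι] [DecidableEq ι] [Nonempty ι]
    {e : ι → ℂ} (he : ∀ i, ‖e i‖ = 1) (θ r ρ t : ℝ) (hr : r ≠ 0) :
    let α : ℂ := Complex.exp (Complex.I * (θ / 2)) / (√(Fintype.card ι) : ℂ)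
    star ((r : ℂ)⁻¹ • e) ⬝ᵥ ((((r ^ 2 / (Fintype.card ι * ρ) : ℝ) : ℂ)
        • (vecMulVec (α • e) (star (α • e)) + (t : ℂ) • (1 - vecMulVec (α • e) (star (α • e)))))
        *ᵥ ((r : ℂ)⁻¹ • e)) = ((1 / ρ : ℝ) : ℂ) := by
  intro α
  have hcard : (0 : ℝ) < Fintype.card ι := by exact_mod_cast Fintype.card_pos
  have hθ : ‖Complex.exp (Complex.I * (θ / 2))‖ = 1 := by
    simpa using Complex.norm_exp_I_mul_ofReal (θ / 2)
  have hα : ‖α‖ ^ 2 * Fintype.card ι = 1 := by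
    rw [norm_div, hθ, Complex.norm_real, Real.norm_of_nonneg (Real.sqrt_nonneg _), div_pow,
      Real.sq_sqrt hcard.le]
    field_simp
  have hreal : r ^ 2 / (Fintype.card ι * ρ) * (‖(r : ℂ)⁻¹‖ ^ 2 * Fintype.card ι) = 1 / ρ := by
    rw [norm_inv, Complex.norm_real, Real.norm_eq_abs, inv_pow, sq_abs]
    field_simp
  rw [star_smul_dotProduct_mulVec_smul_of_forall_norm_eq_one he hα,
    RCLike.ofReal_eq_complex_ofReal, ← Complex.ofReal_mul, hreal]

theorem imaging_functional_at_target_general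
    (M N : ℕ) (hM : 1 ≤ M) (hN : 1 ≤ N)
    (c θ₀ ε : ℝ)
    (ω : ℕ → ℝ)
    (x : Fin N → EuclideanSpace ℝ (Fin 3)) (y₀ : EuclideanSpace ℝ (Fin 3))
    (hxy₀ : ∀ n, x n ≠ y₀)
    (ρ₀ : ℂ)
    (u : Fin N → Fin M → ℂ)
    (hu : ∀ n (m : Fin M), u n m = Complex.exp (Complex.I * (θ₀ / 2)) / (Real.sqrt M : ℂ)
      * Complex.exp (Complex.I * (2 * ω m.val * ‖x n - y₀‖ / c)))
    (a : Fin N → Fin M → ℂ)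
    (ha : ∀ n (m : Fin M), a n m =
      Complex.exp (Complex.I * (2 * ω m.val * ‖x n - y₀‖ / c)) / ((4 * π * ‖x n - y₀‖ : ℝ) : ℂ))
    (Mn : Fin N → Matrix (Fin M) (Fin M) ℂ)
    (hMn : ∀ n, Mn n = (((4 * π * ‖x n - y₀‖) ^ 2 / (M * ‖ρ₀‖) : ℝ) : ℂ)
      • (Matrix.vecMulVec (u n) (fun m => (starRingEnd ℂ) (u n m))
        + ((ε⁻¹ : ℝ) : ℂ) • ((1 : Matrix (Fin M) (Fin M) ℂ)
          - Matrix.vecMulVec (u n) (fun m => (starRingEnd ℂ) (u n m)))))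
    (F : ℂ)
    (hF : F = (1 / (N : ℂ)) * ∑ n : Fin N,
      dotProduct (fun m => (starRingEnd ℂ) (a n m)) ((Mn n).mulVec (a n))) :
    F = ((1 / ‖ρ₀‖ : ℝ) : ℂ) ∧ 1 / F = ((‖ρ₀‖ : ℝ) : ℂ) := by
  have : Nonempty (Fin M) := ⟨⟨0, hM⟩⟩
  have hchannel (n : Fin N) :
      (fun m => starRingEnd ℂ (a n m)) ⬝ᵥ (Mn n *ᵥ a n) = ((1 / ‖ρ₀‖ : ℝ) : ℂ) := by
    have hr : 4 * π * ‖x n - y₀‖ ≠ 0 := by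
      have := norm_pos_iff.mpr (sub_ne_zero.mpr (hxy₀ n))
      positivity
    set e : Fin M → ℂ := fun m => Complex.exp (Complex.I * (2 * ω m.val * ‖x n - y₀‖ / c))
    have he (m : Fin M) : ‖e m‖ = 1 := by
      simpa using Complex.norm_exp_I_mul_ofReal (2 * ω m.val * ‖x n - y₀‖ / c)
    have hMn' : Mn n = _ • (vecMulVec (u n) (star (u n))
        + _ • (1 - vecMulVec (u n) (star (u n)))) := hMn n
    change star (a n) ⬝ᵥ _ = _
    rw [hMn', show u n = (Complex.exp (Complex.I * (θ₀ / 2)) / (√M : ℂ)) • e from funext (hu n),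
      show a n = ((4 * π * ‖x n - y₀‖ : ℝ) : ℂ)⁻¹ • e
      from funext fun m => (ha n m).trans (div_eq_inv_mul _ _)]
    simpa only [Fintype.card_fin] using quadForm_illumination_at_target he θ₀ _ ‖ρ₀‖ ε⁻¹ hr
  have hN' : (N : ℂ) ≠ 0 := Nat.cast_ne_zero.mpr (by omega)
  have hF' : F = ((1 / ‖ρ₀‖ : ℝ) : ℂ) := by
    rw [hF, Finset.sum_congr rfl fun n _ => hchannel n, Finset.sum_const, Finset.card_univ,
      Fintype.card_fin, nsmul_eq_mul, one_div, inv_mul_cancel_left₀ hN']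
  exact ⟨hF', by rw [hF', Complex.ofReal_div, Complex.ofReal_one, one_div_one_div]⟩

/-- Evaluated at the true target location, the single-target imaging functional satisfies
`F_ε(y₀) = 1/|ρ₀|`, hence `1/F_ε(y₀) = |ρ₀|`.
Indices are 0-based: `ω m = ω₁ + m Δω` for `m = 0, …, M-1`. -/
theorem imaging_functional_at_target
    (M N : ℕ) (hM : 1 ≤ M) (hN : 1 ≤ N)
    (c ω₁ Δω θ₀ ε : ℝ) (hc : 0 < c) (hε : 0 < ε)
    (ω : ℕ → ℝ) (hω : ∀ m, ω m = ω₁ + m * Δω)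
    (x : Fin N → EuclideanSpace ℝ (Fin 3)) (y₀ : EuclideanSpace ℝ (Fin 3))
    (hxy₀ : ∀ n, x n ≠ y₀)
    (ρ₀ : ℂ) (hρ₀ : ρ₀ ≠ 0)
    (hρ : ρ₀ = ((‖ρ₀‖ : ℝ) : ℂ) * Complex.exp (θ₀ * Complex.I))
    (u : Fin N → Fin M → ℂ)
    (hu : ∀ n (m : Fin M), u n m = Complex.exp (Complex.I * (θ₀ / 2)) / (Real.sqrt M : ℂ)
      * Complex.exp (Complex.I * (2 * ω m.val * ‖x n - y₀‖ / c)))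
    (a : Fin N → Fin M → ℂ)
    (ha : ∀ n (m : Fin M), a n m =
      Complex.exp (Complex.I * (2 * ω m.val * ‖x n - y₀‖ / c)) / ((4 * π * ‖x n - y₀‖ : ℝ) : ℂ))
    (Mn : Fin N → Matrix (Fin M) (Fin M) ℂ)
    (hMn : ∀ n, Mn n = (((4 * π * ‖x n - y₀‖) ^ 2 / (M * ‖ρ₀‖) : ℝ) : ℂ)
      • (Matrix.vecMulVec (u n) (fun m => (starRingEnd ℂ) (u n m))
        + ((ε⁻¹ : ℝ) : ℂ) • ((1 : Matrix (Fin M) (Fin M) ℂ)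
          - Matrix.vecMulVec (u n) (fun m => (starRingEnd ℂ) (u n m)))))
    (F : ℂ)
    (hF : F = (1 / (N : ℂ)) * ∑ n : Fin N,
      dotProduct (fun m => (starRingEnd ℂ) (a n m)) ((Mn n).mulVec (a n))) :
    F = ((1 / ‖ρ₀‖ : ℝ) : ℂ) ∧ 1 / F = ((‖ρ₀‖ : ℝ) : ℂ) :=
  imaging_functional_at_target_general M N hM hN c θ₀ ε ω x y₀ hxy₀ ρ₀ u hu a ha Mn hMn F hF
end

section
/- For the quadratic cross-range image model, the full-width/half-maximum equation G(x₀ + Δ) = 2 has exactly the two solutions Δ = ± √(ε/(1−ε)) · (6/π) · (c/B) · (L/a) · √((M−1)/(M+1)) · √((N−1)/((N+1) + 12(N−1)(x₀²/a²))). In particular the cross-range resolution is proportional to √(ε/(1−ε)). -/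
open Real

/-!
Substituting `x = x₀ + Δ` turns `G(x₀ + Δ) = 2` into `k Δ² = 1` with `k = (1/ε − 1) K`.
The claimed half-width `D` satisfies `K D² = ε/(1 − ε)`, because
`(1/12)(N+1)/(N−1) + x₀²/a² = ((N+1) + 12(N−1)x₀²/a²) / (12(N−1))`, so that all factors of
`K` cancel against those of `D²` (note `36 / (3 · 12) = 1`). Hence `k D² = 1`, and `k Δ² = 1`
holds exactly when `Δ² = D²`, i.e. `Δ = ±D`.
-/

theorem mul_sq_eq_one_iff_of_mul_sq_eq_one {R : Type*} [CommRing R] [NoZeroDivisors R]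
    {k d t : R} (hd : k * d ^ 2 = 1) : k * t ^ 2 = 1 ↔ t = d ∨ t = -d := by
  rw [← sq_eq_sq_iff_eq_or_eq_neg]
  constructor
  · intro ht
    calc t ^ 2 = t ^ 2 * (k * d ^ 2) := by rw [hd, mul_one]
      _ = (k * t ^ 2) * d ^ 2 := by ring
      _ = d ^ 2 := by rw [ht, one_mul]
  · intro h
    rw [h, hd]

section CrossRange

variable (M N c B L a x₀ ε : ℝ)

noncomputable def crossRangeCurvature : ℝ :=
  π ^ 2 * B ^ 2 * a ^ 2 / (3 * c ^ 2 * L ^ 2) * ((M + 1) / (M - 1))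
    * ((1 / 12) * ((N + 1) / (N - 1)) + x₀ ^ 2 / a ^ 2)

noncomputable def crossRangeHalfWidth : ℝ :=
  √(ε / (1 - ε)) * (6 / π) * (c / B) * (L / a) * √((M - 1) / (M + 1))
    * √((N - 1) / ((N + 1) + 12 * (N - 1) * (x₀ ^ 2 / a ^ 2)))

variable {M N c B L a x₀ ε}

theorem crossRangeHalfWidth_sq (hM : 1 ≤ M) (hN : 1 ≤ N) (hε0 : 0 ≤ ε) (hε1 : ε ≤ 1) :
    crossRangeHalfWidth M N c B L a x₀ ε ^ 2 =
      ε / (1 - ε) * (6 / π) ^ 2 * (c / B) ^ 2 * (L / a) ^ 2 * ((M - 1) / (M + 1))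
        * ((N - 1) / ((N + 1) + 12 * (N - 1) * (x₀ ^ 2 / a ^ 2))) := by
  have hM1 : 0 ≤ M - 1 := by linarith
  have hN1 : 0 ≤ N - 1 := by linarith
  have hε : 0 ≤ 1 - ε := by linarith
  simp only [crossRangeHalfWidth, mul_pow]
  rw [sq_sqrt (by positivity), sq_sqrt (by positivity), sq_sqrt (by positivity)]

theorem crossRangeCurvature_mul_halfWidth_sq (hc : c ≠ 0) (hB : B ≠ 0) (hL : L ≠ 0) (ha : a ≠ 0)
    (hM : 1 < M) (hN : 1 < N) (hε0 : 0 ≤ ε) (hε1 : ε < 1) :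
    crossRangeCurvature M N c B L a x₀ * crossRangeHalfWidth M N c B L a x₀ ε ^ 2
      = ε / (1 - ε) := by
  have hM1 : M - 1 ≠ 0 := by linarith
  have hM2 : M + 1 ≠ 0 := by linarith
  have hN1 : N - 1 ≠ 0 := by linarith
  have hε : 1 - ε ≠ 0 := by linarith
  have hS : (N + 1) + 12 * (N - 1) * (x₀ ^ 2 / a ^ 2) ≠ 0 := by
    have : 0 ≤ (N - 1) * (x₀ ^ 2 / a ^ 2) := mul_nonneg (by linarith) (by positivity)
    linarith
  have hcross : (1 / 12) * ((N + 1) / (N - 1)) + x₀ ^ 2 / a ^ 2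
      = ((N + 1) + 12 * (N - 1) * (x₀ ^ 2 / a ^ 2)) / (12 * (N - 1)) := by
    field_simp
  rw [crossRangeHalfWidth_sq hM.le hN.le hε0 hε1.le, crossRangeCurvature, hcross]
  generalize (N + 1) + 12 * (N - 1) * (x₀ ^ 2 / a ^ 2) = S at hS ⊢
  field_simp
  ring

end CrossRange

/-- FWHM of the quadratic cross-range image model: the equation `G(x₀ + Δ) = 2` has
exactly the two solutions
`Δ = ± √(ε/(1−ε)) (6/π)(c/B)(L/a) √((M−1)/(M+1)) √((N−1)/((N+1) + 12(N−1)(x₀²/a²)))`. -/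
theorem cross_range_fwhm
    (M N : ℕ) (hM : 2 ≤ M) (hN : 2 ≤ N)
    (c B L a x₀ ε : ℝ) (hc : 0 < c) (hB : 0 < B) (hL : 0 < L) (ha : 0 < a)
    (hε0 : 0 < ε) (hε1 : ε < 1)
    (K : ℝ)
    (hK : K = π ^ 2 * B ^ 2 * a ^ 2 / (3 * c ^ 2 * L ^ 2) * (((M : ℝ) + 1) / ((M : ℝ) - 1))
      * ((1 / 12) * (((N : ℝ) + 1) / ((N : ℝ) - 1)) + x₀ ^ 2 / a ^ 2))
    (G : ℝ → ℝ) (hG : ∀ x, G x = 1 + (1 / ε - 1) * K * (x - x₀) ^ 2)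
    (D : ℝ)
    (hD : D = Real.sqrt (ε / (1 - ε)) * (6 / π) * (c / B) * (L / a)
      * Real.sqrt (((M : ℝ) - 1) / ((M : ℝ) + 1))
      * Real.sqrt (((N : ℝ) - 1) / (((N : ℝ) + 1) + 12 * ((N : ℝ) - 1) * (x₀ ^ 2 / a ^ 2)))) :
    ∀ Δ : ℝ, G (x₀ + Δ) = 2 ↔ (Δ = D ∨ Δ = -D) := by
  have hKD : K * D ^ 2 = ε / (1 - ε) := by
    rw [hK, hD]
    exact crossRangeCurvature_mul_halfWidth_sq hc.ne' hB.ne' hL.ne' ha.ne'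
      (Nat.one_lt_cast.mpr hM) (Nat.one_lt_cast.mpr hN) hε0.le hε1
  have hkD : (1 / ε - 1) * K * D ^ 2 = 1 := by
    have : 1 - ε ≠ 0 := by linarith
    rw [mul_assoc, hKD]
    field_simp
  intro Δ
  rw [hG, add_sub_cancel_left, ← mul_sq_eq_one_iff_of_mul_sq_eq_one hkD]
  constructor <;> intro h <;> linarith
end

section
/- Recovery of the complex reflectivity: for any unitary matrices U_n, V_n ∈ ℂ^{M×M} whose first columns are u₀⁽ⁿ⁾ and v₀⁽ⁿ⁾ respectively, with Σ_n⁺ = (1/σ₀⁽ⁿ⁾) diag(1, 1/ε, …, 1/ε), the functional R_ε(y₀) = (1/N) Σ_{n=1}^{N} b_n(y₀)* V_n Σ_n⁺ U_n* a_n(y₀) satisfies R_ε(y₀) = e^{−iθ₀}/|ρ₀|, and hence 1/R_ε(y₀) = |ρ₀| e^{iθ₀} = ρ₀. -/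
/-! The illumination vectors are multiples of the singular vectors: `a_n = α_n u₀⁽ⁿ⁾` and
`b_n = conj(α_n) v₀⁽ⁿ⁾` with `α_n = √M e^{-iθ₀/2} / (4π r_n)`. As `U_n` is unitary with first column
`u₀⁽ⁿ⁾`, `U_n* a_n = α_n e₁`, so `Σ_n⁺` only acts through its first entry `1/σ₀⁽ⁿ⁾` (and `ε` drops
out); then `V_n e₁ = v₀⁽ⁿ⁾` is a unit vector. Each summand is thus `α_n² / σ₀⁽ⁿ⁾ = e^{-iθ₀}/|ρ₀|`,
independently of `n`. -/

open Real Complex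
open scoped Matrix

namespace Matrix

variable {n α : Type*} [Fintype n] [DecidableEq n] [CommRing α]

theorem conjTranspose_mulVec_col_of_mem_unitaryGroup [StarRing α] {U : Matrix n n α}
    (hU : U ∈ unitaryGroup n α) (j : n) : Uᴴ *ᵥ U.col j = Pi.single j 1 := by
  rw [← mulVec_single_one, mulVec_mulVec, ← star_eq_conjTranspose,
    Unitary.star_mul_self_of_mem hU, one_mulVec]

theorem star_col_dotProduct_col_of_mem_unitaryGroup [StarRing α] {U : Matrix n n α}
    (hU : U ∈ unitaryGroup n α) (j : n) : star (U.col j) ⬝ᵥ U.col j = 1 := by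
  simpa [mulVec, dotProduct] using
    congr_fun (conjTranspose_mulVec_col_of_mem_unitaryGroup hU j) j

theorem mulVec_diagonal_mulVec_smul_single (V : Matrix n n α) (d : n → α) (j : n) (a : α) :
    V *ᵥ diagonal d *ᵥ a • Pi.single j 1 = (a * d j) • V.col j := by
  rw [mulVec_smul, mulVec_smul, diagonal_mulVec_single, mul_one, ← mul_one (d j),
    ← smul_eq_mul, Pi.single_smul', mulVec_smul, mulVec_single_one, smul_smul, smul_eq_mul,
    mul_one]

theorem star_smul_col_dotProduct_mulVec_smul_col [StarRing α] {U V : Matrix n n α}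
    (hU : U ∈ unitaryGroup n α) (hV : V ∈ unitaryGroup n α) (d : n → α) (j : n) (a b : α) :
    star (b • V.col j) ⬝ᵥ (V * diagonal d * Uᴴ) *ᵥ (a • U.col j) = star b * a * d j := by
  rw [← mulVec_mulVec, ← mulVec_mulVec, mulVec_smul,
    conjTranspose_mulVec_col_of_mem_unitaryGroup hU, mulVec_diagonal_mulVec_smul_single, star_smul,
    smul_dotProduct, dotProduct_smul, star_col_dotProduct_col_of_mem_unitaryGroup hV, smul_eq_mul,
    smul_eq_mul, mul_one, mul_assoc]

end Matrix

theorem star_dotProduct_mulVec_smul_diagonal_eq_exp_neg_div {M : ℕ}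
    {U V : Matrix (Fin M) (Fin M) ℂ}
    (hU : U ∈ Matrix.unitaryGroup (Fin M) ℂ) (hV : V ∈ Matrix.unitaryGroup (Fin M) ℂ)
    {j : Fin M} {d : Fin M → ℂ} (hd : d j = 1) {θ L ρ : ℝ} (hL : L ≠ 0) {z w a b : Fin M → ℂ}
    (hUj : ∀ m, U m j = exp (I * (θ / 2)) / (√M : ℂ) * z m)
    (hVj : ∀ m, V m j = exp (-(I * (θ / 2))) / (√M : ℂ) * w m)
    (ha : ∀ m, a m = z m / (L : ℂ)) (hb : ∀ m, b m = w m / (L : ℂ)) :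
    star b ⬝ᵥ (V * (((L ^ 2 / (M * ρ) : ℝ) : ℂ) • Matrix.diagonal d) * Uᴴ) *ᵥ a
      = exp (-(θ * I)) / ρ := by
  have hM : (M : ℝ) ≠ 0 := by exact_mod_cast j.pos.ne'
  have hsqrt : (√M : ℂ) ≠ 0 := by exact_mod_cast (Real.sqrt_pos.mpr (by positivity)).ne'
  set α : ℂ := √M * exp (-(I * (θ / 2))) / L with hα
  have ha' : a = α • U.col j := by
    funext m
    rw [Pi.smul_apply, Matrix.col_apply, hUj, ha, smul_eq_mul, hα, Complex.exp_neg]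
    field_simp
  have hb' : b = star α • V.col j := by
    have hα_star : star α = √M * exp (I * (θ / 2)) / L := by simp [hα, ← exp_conj, map_ofNat]
    funext m
    rw [Pi.smul_apply, Matrix.col_apply, hVj, hb, smul_eq_mul, hα_star, Complex.exp_neg]
    field_simp
  have hα_sq : α ^ 2 = M * exp (-(θ * I)) / L ^ 2 := by
    rw [hα, div_pow, mul_pow, ← Complex.exp_nat_mul, ← ofReal_pow, Real.sq_sqrt M.cast_nonneg]
    push_cast
    ring_nf
  rw [ha', hb', ← Matrix.diagonal_smul, Matrix.star_smul_col_dotProduct_mulVec_smul_col hU hV,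
    star_star, Pi.smul_apply, hd, smul_eq_mul, mul_one, ← sq, hα_sq]
  push_cast
  field_simp
  rw [div_mul_cancel_left₀ (by exact_mod_cast mul_ne_zero hM hL), one_div]

theorem reflectivity_recovery
    (M N : ℕ) (hM : 1 ≤ M) (hN : 1 ≤ N)
    (c Δω θ₀ ε : ℝ)
    (ω : ℕ → ℝ)
    (x : Fin N → EuclideanSpace ℝ (Fin 3)) (y₀ : EuclideanSpace ℝ (Fin 3))
    (hxy : ∀ n, x n ≠ y₀)
    (ρ₀ : ℂ)
    (hρ : ρ₀ = (‖ρ₀‖ : ℂ) * Complex.exp (θ₀ * Complex.I))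
    (u v a b : Fin N → Fin M → ℂ)
    (hu : ∀ n (m : Fin M), u n m = Complex.exp (Complex.I * (θ₀ / 2)) / (Real.sqrt M : ℂ)
      * Complex.exp (Complex.I * (2 * ω m.val * ‖x n - y₀‖ / c)))
    (hv : ∀ n (m : Fin M), v n m = Complex.exp (-(Complex.I * (θ₀ / 2))) / (Real.sqrt M : ℂ)
      * Complex.exp (-(Complex.I * (2 * (m.val : ℝ) * Δω * ‖x n - y₀‖ / c))))
    (ha : ∀ n (m : Fin M), a n m =
      Complex.exp (Complex.I * (2 * ω m.val * ‖x n - y₀‖ / c)) / ((4 * π * ‖x n - y₀‖ : ℝ) : ℂ))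
    (hb : ∀ n (m : Fin M), b n m =
      Complex.exp (-(Complex.I * (2 * (m.val : ℝ) * Δω * ‖x n - y₀‖ / c)))
        / ((4 * π * ‖x n - y₀‖ : ℝ) : ℂ))
    (U V : Fin N → Matrix (Fin M) (Fin M) ℂ)
    (hU : ∀ n, U n ∈ Matrix.unitaryGroup (Fin M) ℂ)
    (hV : ∀ n, V n ∈ Matrix.unitaryGroup (Fin M) ℂ)
    (hUcol : ∀ n (m : Fin M), U n m ⟨0, by omega⟩ = u n m)
    (hVcol : ∀ n (m : Fin M), V n m ⟨0, by omega⟩ = v n m)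
    (Sp : Fin N → Matrix (Fin M) (Fin M) ℂ)
    (hSp : ∀ n, Sp n = (((4 * π * ‖x n - y₀‖) ^ 2 / (M * ‖ρ₀‖) : ℝ) : ℂ)
      • Matrix.diagonal (fun j : Fin M =>
          if j = (⟨0, by omega⟩ : Fin M) then 1 else ((ε⁻¹ : ℝ) : ℂ)))
    (R : ℂ)
    (hR : R = (1 / (N : ℂ)) * ∑ n : Fin N,
      dotProduct (fun m => (starRingEnd ℂ) (b n m))
        ((V n * Sp n * (U n).conjTranspose).mulVec (a n))) :
    R = Complex.exp (-(θ₀ * Complex.I)) / ((‖ρ₀‖ : ℝ) : ℂ) ∧ 1 / R = ρ₀ := by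
  have hterm : ∀ n, dotProduct (fun m => (starRingEnd ℂ) (b n m))
      ((V n * Sp n * (U n).conjTranspose).mulVec (a n)) = exp (-(θ₀ * I)) / ((‖ρ₀‖ : ℝ) : ℂ) := by
    intro n
    have hL : 4 * π * ‖x n - y₀‖ ≠ 0 := by
      have := norm_pos_iff.mpr (sub_ne_zero.mpr (hxy n))
      positivity
    rw [hSp n]
    exact star_dotProduct_mulVec_smul_diagonal_eq_exp_neg_div (hU n) (hV n) (if_pos rfl) hL
      (fun m => (hUcol n m).trans (hu n m)) (fun m => (hVcol n m).trans (hv n m)) (ha n) (hb n)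
  have hR_eq : R = exp (-(θ₀ * I)) / ((‖ρ₀‖ : ℝ) : ℂ) := by
    rw [hR, Finset.sum_congr rfl fun n _ => hterm n, Finset.sum_const, Finset.card_univ,
      Fintype.card_fin, nsmul_eq_mul, ← mul_assoc,
      one_div_mul_cancel (Nat.cast_ne_zero.mpr (by omega)), one_mul]
  refine ⟨hR_eq, ?_⟩
  rw [hR_eq, one_div_div, Complex.exp_neg, div_inv_eq_mul]
  exact hρ.symm
end

section
/- Statistical stability of the expected image: there exists a constant C > 0, depending only on α, ε, N and |ρ₀|, such that for every probability space and every random vector ν = (ν_1, …, ν_N) with E[ν_n] = 0 and E[ν_n²] < ∞ for all n, the image value G(ν) = |ρ₀| · [1 + α(1−ε)(1/N) Σ_{n=1}^{N} (T_n + ν_n)²]^{−1} satisfies |E[G(ν)] − |ρ₀| I₀| ≤ C Σ_{n=1}^{N} E[ν_n²], where I₀ = [1 + α(1−ε)(1/N) Σ_{n=1}^{N} T_n²]^{−1}. In particular, if E[ν_n²] ≤ σ² for all n, the expected image equals the unperturbed image |ρ₀| I₀ up to an error of order O(σ²). -/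
/-!
Write `t = c Σₙ (Tₙ + νₙ)²` and `s = c Σₙ Tₙ²` with `c = α(1 - ε)/N`. Expanding `t ↦ (1 + t)⁻¹`
to first order at `s`,
`(1 + t)⁻¹ = (1 + s)⁻¹ - (t - s)/(1 + s)² + (t - s)²/((1 + t)(1 + s)²)`.
Since the `νₙ` are centred, `E[t - s] = c Σₙ E[νₙ²]`. Writing `t - s = c Σₙ νₙ (2Tₙ + νₙ)`,
Cauchy–Schwarz gives `(t - s)² ≤ 2c (Σₙ νₙ²)(t + s)`, and `t + s ≤ (1 + t)(1 + s)²`, so the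
remainder lies between `0` and `2c Σₙ νₙ²`. Both the linear term and the remainder therefore have
expectations in `[0, 2c Σₙ E[νₙ²]]`, and the constant `C = 2ρc` works, independently of `T`.
-/

open MeasureTheory

theorem inv_one_add_eq_sub_add {s t : ℝ} (hs : 0 ≤ s) (ht : 0 ≤ t) :
    (1 + t)⁻¹ = (1 + s)⁻¹ - (t - s) / (1 + s) ^ 2 + (t - s) ^ 2 / ((1 + t) * (1 + s) ^ 2) := by
  have h1 : (1 : ℝ) + t ≠ 0 := by positivity
  have h2 : (1 : ℝ) + s ≠ 0 := by positivity
  field_simp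
  ring

theorem sq_sub_div_le_of_sq_sub_le {s t k : ℝ} (hs : 0 ≤ s) (ht : 0 ≤ t) (hk : 0 ≤ k)
    (h : (t - s) ^ 2 ≤ k * (t + s)) : (t - s) ^ 2 / ((1 + t) * (1 + s) ^ 2) ≤ k := by
  rw [div_le_iff₀ (by positivity)]
  have hts : t + s ≤ (1 + t) * (1 + s) ^ 2 := by nlinarith [mul_nonneg ht hs]
  nlinarith [mul_le_mul_of_nonneg_left hts hk]

theorem sq_sum_add_sq_sub_sum_sq_le {ι : Type*} (S : Finset ι) (a v : ι → ℝ) :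
    (∑ i ∈ S, (a i + v i) ^ 2 - ∑ i ∈ S, a i ^ 2) ^ 2
      ≤ 2 * (∑ i ∈ S, v i ^ 2) * (∑ i ∈ S, (a i + v i) ^ 2 + ∑ i ∈ S, a i ^ 2) := by
  have hdiff : ∑ i ∈ S, (a i + v i) ^ 2 - ∑ i ∈ S, a i ^ 2 = ∑ i ∈ S, v i * (2 * a i + v i) := by
    rw [← Finset.sum_sub_distrib]
    exact Finset.sum_congr rfl fun i _ => by ring
  have hsq : ∑ i ∈ S, (2 * a i + v i) ^ 2 ≤ 2 * (∑ i ∈ S, (a i + v i) ^ 2 + ∑ i ∈ S, a i ^ 2) := by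
    rw [← Finset.sum_add_distrib, Finset.mul_sum]
    exact Finset.sum_le_sum fun i _ => by nlinarith [sq_nonneg (v i)]
  calc (∑ i ∈ S, (a i + v i) ^ 2 - ∑ i ∈ S, a i ^ 2) ^ 2
      ≤ (∑ i ∈ S, v i ^ 2) * ∑ i ∈ S, (2 * a i + v i) ^ 2 := by
        rw [hdiff]; exact Finset.sum_mul_sq_le_sq_mul_sq S v _
    _ ≤ (∑ i ∈ S, v i ^ 2) * (2 * (∑ i ∈ S, (a i + v i) ^ 2 + ∑ i ∈ S, a i ^ 2)) :=
        mul_le_mul_of_nonneg_left hsq (Finset.sum_nonneg fun i _ => sq_nonneg (v i))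
    _ = _ := by ring

section Probability

variable {Ω : Type*} [MeasurableSpace Ω] {μ : Measure Ω} [IsProbabilityMeasure μ]

theorem abs_integral_inv_one_add_sub_le {τ q : Ω → ℝ} {s : ℝ} (hs : 0 ≤ s)
    (hτ0 : ∀ x, 0 ≤ τ x) (hτ : Integrable τ μ) (hq0 : ∀ x, 0 ≤ q x) (hq : Integrable q μ)
    (hτq : ∀ x, (τ x - s) ^ 2 ≤ q x * (τ x + s))
    (hs_le : s ≤ ∫ x, τ x ∂μ) (hmean_le : ∫ x, τ x ∂μ - s ≤ ∫ x, q x ∂μ) :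
    |∫ x, (1 + τ x)⁻¹ ∂μ - (1 + s)⁻¹| ≤ ∫ x, q x ∂μ := by
  have hinv : Integrable (fun x => (1 + τ x)⁻¹) μ := by
    refine Integrable.mono' (integrable_const 1) ?_ (ae_of_all _ fun x => ?_)
    · exact (aemeasurable_const.add hτ.aemeasurable).inv.aestronglyMeasurable
    · rw [Real.norm_eq_abs, abs_of_nonneg (by have := hτ0 x; positivity)]
      exact inv_le_one_of_one_le₀ (by linarith [hτ0 x])
  set R : Ω → ℝ := fun x => (1 + τ x)⁻¹ - (1 + s)⁻¹ + (τ x - s) / (1 + s) ^ 2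
  have hR_eq : ∀ x, R x = (τ x - s) ^ 2 / ((1 + τ x) * (1 + s) ^ 2) := fun x => by
    simp only [R, inv_one_add_eq_sub_add hs (hτ0 x)]; ring
  have hinv_sub : Integrable (fun x => (1 + τ x)⁻¹ - (1 + s)⁻¹) μ := hinv.sub (integrable_const _)
  have hlin : Integrable (fun x => (τ x - s) / (1 + s) ^ 2) μ :=
    (hτ.sub (integrable_const s)).div_const _
  have hR : Integrable R μ := hinv_sub.add hlin
  have hR_int : ∫ x, R x ∂μ
      = ∫ x, (1 + τ x)⁻¹ ∂μ - (1 + s)⁻¹ + (∫ x, τ x ∂μ - s) / (1 + s) ^ 2 := by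
    simp only [R]
    rw [integral_add hinv_sub hlin, integral_sub hinv (integrable_const _), integral_div,
      integral_sub hτ (integrable_const s)]
    simp
  have hR_nonneg : 0 ≤ ∫ x, R x ∂μ :=
    integral_nonneg fun x => by rw [hR_eq]; have := hτ0 x; positivity
  have hR_le : ∫ x, R x ∂μ ≤ ∫ x, q x ∂μ :=
    integral_mono hR hq fun x => by
      rw [hR_eq]; exact sq_sub_div_le_of_sq_sub_le hs (hτ0 x) (hq0 x) (hτq x)
  have hlin_le : (∫ x, τ x ∂μ - s) / (1 + s) ^ 2 ≤ ∫ x, q x ∂μ :=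
    (div_le_self (by linarith) (one_le_pow₀ (by linarith))).trans hmean_le
  have hsplit : ∫ x, (1 + τ x)⁻¹ ∂μ - (1 + s)⁻¹
      = ∫ x, R x ∂μ - (∫ x, τ x ∂μ - s) / (1 + s) ^ 2 := by
    rw [hR_int]; ring
  rw [hsplit]
  exact abs_sub_le_of_nonneg_of_le hR_nonneg hR_le (by have := sub_nonneg.2 hs_le; positivity)
    hlin_le

theorem integrable_const_add_sq {X : Ω → ℝ} (a : ℝ) (hX : Integrable X μ)
    (hX2 : Integrable (fun x => X x ^ 2) μ) : Integrable (fun x => (a + X x) ^ 2) μ := by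
  have h : Integrable (fun x => a ^ 2 + 2 * a * X x + X x ^ 2) μ :=
    ((integrable_const _).add (hX.const_mul _)).add hX2
  exact h.congr (ae_of_all _ fun x => by ring)

theorem integral_const_add_sq {X : Ω → ℝ} (a : ℝ) (hX : Integrable X μ)
    (hX2 : Integrable (fun x => X x ^ 2) μ) (hX0 : ∫ x, X x ∂μ = 0) :
    ∫ x, (a + X x) ^ 2 ∂μ = a ^ 2 + ∫ x, X x ^ 2 ∂μ := calc
  ∫ x, (a + X x) ^ 2 ∂μ = ∫ x, (a ^ 2 + 2 * a * X x) + X x ^ 2 ∂μ :=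
    integral_congr_ae (ae_of_all _ fun x => by ring)
  _ = a ^ 2 + ∫ x, X x ^ 2 ∂μ := by
    have hlin : Integrable (fun x => a ^ 2 + 2 * a * X x) μ :=
      (integrable_const _).add (hX.const_mul _)
    rw [integral_add hlin hX2,
      integral_add (integrable_const _) (hX.const_mul _), integral_const_mul, hX0]
    simp

end Probability

theorem expected_image_stability_general
    (N : ℕ) (hN : 1 ≤ N) (α ε ρ : ℝ) (hα : 0 < α) (hε1 : ε < 1)
    (hρ : 0 < ρ) (T : Fin N → ℝ) :
    ∃ C : ℝ, 0 < C ∧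
      ∀ (Ω : Type) (_ : MeasurableSpace Ω) (μ : Measure Ω),
        IsProbabilityMeasure μ →
        ∀ ν : Fin N → Ω → ℝ,
          (∀ n, Measurable (ν n)) →
          (∀ n, Integrable (ν n) μ) →
          (∀ n, ∫ x, ν n x ∂μ = 0) →
          (∀ n, Integrable (fun x => (ν n x) ^ 2) μ) →
          |(∫ x, ρ * (1 + α * (1 - ε) * ((1 : ℝ) / N) * ∑ n : Fin N, (T n + ν n x) ^ 2)⁻¹ ∂μ)
              - ρ * (1 + α * (1 - ε) * ((1 : ℝ) / N) * ∑ n : Fin N, (T n) ^ 2)⁻¹|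
            ≤ C * ∑ n : Fin N, ∫ x, (ν n x) ^ 2 ∂μ := by
  set c := α * (1 - ε) * ((1 : ℝ) / N)
  have hc : 0 < c := by
    have : (0 : ℝ) < N := by exact_mod_cast hN
    have : 0 < 1 - ε := by linarith
    positivity
  refine ⟨ρ * (2 * c), by positivity, fun Ω _ μ _ ν _ hν hν0 hν2 => ?_⟩
  have hsum_int : Integrable (fun x => ∑ n, (T n + ν n x) ^ 2) μ :=
    integrable_finsetSum _ fun n _ => integrable_const_add_sq (T n) (hν n) (hν2 n)
  have hsum : ∫ x, ∑ n, (T n + ν n x) ^ 2 ∂μ = ∑ n, T n ^ 2 + ∑ n, ∫ x, ν n x ^ 2 ∂μ := by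
    rw [integral_finsetSum _ fun n _ => integrable_const_add_sq (T n) (hν n) (hν2 n),
      ← Finset.sum_add_distrib]
    exact Finset.sum_congr rfl fun n _ => integral_const_add_sq (T n) (hν n) (hν2 n) (hν0 n)
  have hσ : 0 ≤ ∑ n, ∫ x, ν n x ^ 2 ∂μ :=
    Finset.sum_nonneg fun n _ => integral_nonneg fun x => sq_nonneg _
  have hσ_eq : ∫ x, ∑ n, ν n x ^ 2 ∂μ = ∑ n, ∫ x, ν n x ^ 2 ∂μ :=
    integral_finsetSum _ fun n _ => hν2 n
  have key := abs_integral_inv_one_add_sub_le (μ := μ) (s := c * ∑ n, T n ^ 2)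
    (τ := fun x => c * ∑ n, (T n + ν n x) ^ 2) (q := fun x => 2 * c * ∑ n, ν n x ^ 2)
    (by positivity) (fun x => by positivity) (hsum_int.const_mul c) (fun x => by positivity)
    ((integrable_finsetSum _ fun n _ => hν2 n).const_mul _)
    (fun x => by
      have := sq_sum_add_sq_sub_sum_sq_le Finset.univ T (fun n => ν n x)
      rw [← mul_sub, mul_pow, mul_assoc 2 c, ← mul_add]
      nlinarith [mul_le_mul_of_nonneg_left this (sq_nonneg c)])
    (by rw [integral_const_mul, hsum]; nlinarith)
    (by rw [integral_const_mul, integral_const_mul, hsum, hσ_eq]; nlinarith)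
  rw [integral_const_mul, hσ_eq] at key
  rw [integral_const_mul, ← mul_sub, abs_mul, abs_of_pos hρ]
  exact (mul_le_mul_of_nonneg_left key hρ.le).trans_eq (by ring)

/-- Statistical stability of the expected image: there is `C > 0`, depending only on
`α, ε, N, |ρ₀|`, such that for every probability space and every random vector
`ν = (ν_1, …, ν_N)` with `E[ν_n] = 0` and `E[ν_n²] < ∞`, the image value
`G(ν) = |ρ₀| [1 + α(1−ε)(1/N) Σ_n (T_n + ν_n)²]⁻¹` satisfies
`|E[G(ν)] − |ρ₀| I₀| ≤ C Σ_n E[ν_n²]`, where `I₀ = [1 + α(1−ε)(1/N) Σ_n T_n²]⁻¹`. -/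
theorem expected_image_stability
    (N : ℕ) (hN : 1 ≤ N) (α ε ρ : ℝ) (hα : 0 < α) (hε0 : 0 < ε) (hε1 : ε < 1)
    (hρ : 0 < ρ) (T : Fin N → ℝ) :
    ∃ C : ℝ, 0 < C ∧
      ∀ (Ω : Type) (_ : MeasurableSpace Ω) (μ : Measure Ω),
        IsProbabilityMeasure μ →
        ∀ ν : Fin N → Ω → ℝ,
          (∀ n, Measurable (ν n)) →
          (∀ n, Integrable (ν n) μ) →
          (∀ n, ∫ x, ν n x ∂μ = 0) →
          (∀ n, Integrable (fun x => (ν n x) ^ 2) μ) →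
          |(∫ x, ρ * (1 + α * (1 - ε) * ((1 : ℝ) / N) * ∑ n : Fin N, (T n + ν n x) ^ 2)⁻¹ ∂μ)
              - ρ * (1 + α * (1 - ε) * ((1 : ℝ) / N) * ∑ n : Fin N, (T n) ^ 2)⁻¹|
            ≤ C * ∑ n : Fin N, ∫ x, (ν n x) ^ 2 ∂μ :=
  expected_image_stability_general N hN α ε ρ hα hε1 hρ T
end

section
/- Statistical stability of the second moment of the image: there exists a constant C > 0, depending only on α, ε, N and |ρ₀|, such that for every probability space and every random vector ν = (ν_1, …, ν_N) with E[ν_n] = 0 and E[ν_n²] < ∞ for all n, the image value G(ν) = |ρ₀| · [1 + α(1−ε)(1/N) Σ_{n=1}^{N} (T_n + ν_n)²]^{−1} satisfies |E[G(ν)²] − |ρ₀|² I₀²| ≤ C Σ_{n=1}^{N} E[ν_n²], where I₀ = [1 + α(1−ε)(1/N) Σ_{n=1}^{N} T_n²]^{−1}. -/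
/-!
Write `u = 1 + c‖T + v‖²` and `u₀ = 1 + c‖T‖²`. The identity
`u⁻² - u₀⁻² + 2(u - u₀)/u₀³ = (u - u₀)²(u₀ + 2u)/(u²u₀³)` together with the Cauchy–Schwarz bound
`(u - u₀)² ≤ 2c‖v‖²(u + u₀)` shows that the first-order Taylor expansion of `v ↦ u⁻²` at `0`
has remainder at most `12c‖v‖²`, uniformly in `T` and `v`. The linear term `-4c⟪T, ν⟫/u₀³` has
mean zero, so integrating the pointwise bound gives the estimate with `C = 12ρ²c`.
-/
open MeasureTheory

theorem inv_sq_sub_inv_sq_add_two_mul_div {u u₀ : ℝ} (hu : u ≠ 0) (hu₀ : u₀ ≠ 0) :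
    (u⁻¹) ^ 2 - (u₀⁻¹) ^ 2 + 2 * (u - u₀) / u₀ ^ 3
      = (u - u₀) ^ 2 * (u₀ + 2 * u) / (u ^ 2 * u₀ ^ 3) := by
  field_simp
  ring

theorem inv_sq_sub_inv_sq_add_two_mul_div_mem_Icc {u u₀ K : ℝ} (hu : 1 ≤ u) (hu₀ : 1 ≤ u₀)
    (hK : (u - u₀) ^ 2 ≤ K * (u + u₀)) :
    (u⁻¹) ^ 2 - (u₀⁻¹) ^ 2 + 2 * (u - u₀) / u₀ ^ 3 ∈ Set.Icc 0 (6 * K) := by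
  rw [inv_sq_sub_inv_sq_add_two_mul_div (by positivity) (by positivity)]
  refine ⟨by positivity, (div_le_iff₀ (by positivity)).2 ?_⟩
  have hK0 : 0 ≤ K := nonneg_of_mul_nonneg_left ((sq_nonneg _).trans hK) (by linarith)
  have hprod : (u + u₀) * (u₀ + 2 * u) ≤ 6 * (u ^ 2 * u₀ ^ 3) := by
    have h1 : u₀ ≤ u₀ ^ 3 := le_self_pow₀ hu₀ (by norm_num)
    have h2 : u ≤ u ^ 2 := le_self_pow₀ hu (by norm_num)
    nlinarith [mul_le_mul h2 h1 (by linarith) (by positivity),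
      mul_nonneg (sub_nonneg.2 hu) (sub_nonneg.2 hu₀)]
  calc (u - u₀) ^ 2 * (u₀ + 2 * u) ≤ K * (u + u₀) * (u₀ + 2 * u) := by gcongr
    _ ≤ K * (6 * (u ^ 2 * u₀ ^ 3)) := by rw [mul_assoc]; gcongr
    _ = 6 * K * (u ^ 2 * u₀ ^ 3) := by ring

section InnerProductSpace

variable {E : Type*} [NormedAddCommGroup E] [InnerProductSpace ℝ E]

theorem sq_norm_add_sq_sub_norm_sq_le (x y : E) :
    (‖x + y‖ ^ 2 - ‖x‖ ^ 2) ^ 2 ≤ 2 * ‖y‖ ^ 2 * (‖x‖ ^ 2 + ‖x + y‖ ^ 2) := by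
  have hd : ‖x + y‖ ^ 2 - ‖x‖ ^ 2 = inner ℝ y (x + (x + y)) := by
    rw [inner_add_right, inner_add_right, real_inner_self_eq_norm_sq, norm_add_sq_real,
      real_inner_comm]
    ring
  have hcs : |inner ℝ y (x + (x + y))| ≤ ‖y‖ * (‖x‖ + ‖x + y‖) :=
    (abs_real_inner_le_norm _ _).trans (by gcongr; exact norm_add_le _ _)
  rw [hd, ← sq_abs]
  calc |inner ℝ y (x + (x + y))| ^ 2 ≤ (‖y‖ * (‖x‖ + ‖x + y‖)) ^ 2 := by gcongr
    _ ≤ 2 * ‖y‖ ^ 2 * (‖x‖ ^ 2 + ‖x + y‖ ^ 2) := by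
        nlinarith [mul_nonneg (sq_nonneg ‖y‖) (sq_nonneg (‖x‖ - ‖x + y‖))]

theorem abs_inv_one_add_mul_norm_sq_sq_sub_le {c : ℝ} (hc : 0 ≤ c) (x y : E) :
    |((1 + c * ‖x + y‖ ^ 2)⁻¹) ^ 2 - ((1 + c * ‖x‖ ^ 2)⁻¹) ^ 2
        + 4 * c * inner ℝ x y / (1 + c * ‖x‖ ^ 2) ^ 3| ≤ 12 * c * ‖y‖ ^ 2 := by
  set u := 1 + c * ‖x + y‖ ^ 2
  set u₀ := 1 + c * ‖x‖ ^ 2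
  have hu : 1 ≤ u := by simp only [u, le_add_iff_nonneg_right]; positivity
  have hu₀ : 1 ≤ u₀ := by simp only [u₀, le_add_iff_nonneg_right]; positivity
  have hinner : 4 * c * inner ℝ x y = 2 * (u - u₀) - 2 * c * ‖y‖ ^ 2 := by
    simp only [u, u₀, norm_add_sq_real]; ring
  have hK : (u - u₀) ^ 2 ≤ 2 * c * ‖y‖ ^ 2 * (u + u₀) := by
    calc (u - u₀) ^ 2 = c ^ 2 * (‖x + y‖ ^ 2 - ‖x‖ ^ 2) ^ 2 := by ring
      _ ≤ c ^ 2 * (2 * ‖y‖ ^ 2 * (‖x‖ ^ 2 + ‖x + y‖ ^ 2)) := by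
          gcongr; exact sq_norm_add_sq_sub_norm_sq_le x y
      _ ≤ 2 * c * ‖y‖ ^ 2 * (u + u₀) := by
          simp only [u, u₀]; nlinarith [mul_nonneg hc (sq_nonneg ‖y‖)]
  obtain ⟨hR0, hR⟩ := inv_sq_sub_inv_sq_add_two_mul_div_mem_Icc hu hu₀ hK
  have ht : 2 * c * ‖y‖ ^ 2 / u₀ ^ 3 ≤ 2 * c * ‖y‖ ^ 2 :=
    div_le_self (by positivity) (one_le_pow₀ hu₀)
  have ht0 : 0 ≤ 2 * c * ‖y‖ ^ 2 / u₀ ^ 3 := by positivity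
  rw [hinner, sub_div, ← add_sub_assoc, abs_le]
  constructor <;> linarith

end InnerProductSpace

theorem abs_inv_one_add_mul_sum_sq_sq_sub_le {ι : Type*} [Fintype ι] {c : ℝ} (hc : 0 ≤ c)
    (x y : ι → ℝ) :
    |((1 + c * ∑ i, (x i + y i) ^ 2)⁻¹) ^ 2 - ((1 + c * ∑ i, x i ^ 2)⁻¹) ^ 2
        + 4 * c * (∑ i, x i * y i) / (1 + c * ∑ i, x i ^ 2) ^ 3| ≤ 12 * c * ∑ i, y i ^ 2 := by
  simpa [EuclideanSpace.real_norm_sq_eq, PiLp.inner_apply, mul_comm] using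
    abs_inv_one_add_mul_norm_sq_sq_sub_le hc (WithLp.toLp 2 x : EuclideanSpace ℝ ι)
      (WithLp.toLp 2 y)

theorem abs_integral_sub_le_of_abs_sub_add_le {Ω : Type*} [MeasurableSpace Ω] {μ : Measure Ω}
    [IsProbabilityMeasure μ] {F L B : Ω → ℝ} {a : ℝ} (hF : Integrable F μ) (hL : Integrable L μ)
    (hL0 : ∫ x, L x ∂μ = 0) (hB : Integrable B μ) (h : ∀ x, |F x - a + L x| ≤ B x) :
    |∫ x, F x ∂μ - a| ≤ ∫ x, B x ∂μ := by
  have hFa : Integrable (fun x => F x - a) μ := hF.sub (integrable_const a)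
  calc |∫ x, F x ∂μ - a| = |∫ x, (F x - a + L x) ∂μ| := by
        rw [integral_add hFa hL, integral_sub hF (integrable_const a), hL0, integral_const,
          probReal_univ, one_smul, add_zero]
    _ ≤ ∫ x, |F x - a + L x| ∂μ := abs_integral_le_integral_abs
    _ ≤ ∫ x, B x ∂μ := integral_mono (hFa.add hL).abs hB h

theorem sq_mul_inv_one_add_le (ρ : ℝ) {s : ℝ} (hs : 0 ≤ s) : (ρ * (1 + s)⁻¹) ^ 2 ≤ ρ ^ 2 := by
  rw [mul_pow]
  exact mul_le_of_le_one_right (sq_nonneg ρ)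
    (pow_le_one₀ (by positivity) (inv_le_one_of_one_le₀ (by linarith)))

theorem second_moment_image_stability_general
    (N : ℕ) (hN : 1 ≤ N) (α ε ρ : ℝ) (hα : 0 < α) (hε1 : ε < 1)
    (hρ : 0 < ρ) (T : Fin N → ℝ) :
    ∃ C : ℝ, 0 < C ∧
      ∀ (Ω : Type) (_ : MeasurableSpace Ω) (μ : Measure Ω),
        IsProbabilityMeasure μ →
        ∀ ν : Fin N → Ω → ℝ,
          (∀ n, Measurable (ν n)) →
          (∀ n, Integrable (ν n) μ) →
          (∀ n, ∫ x, ν n x ∂μ = 0) →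
          (∀ n, Integrable (fun x => (ν n x) ^ 2) μ) →
          |(∫ x, (ρ * (1 + α * (1 - ε) * ((1 : ℝ) / N)
                * ∑ n : Fin N, (T n + ν n x) ^ 2)⁻¹) ^ 2 ∂μ)
              - ρ ^ 2 * ((1 + α * (1 - ε) * ((1 : ℝ) / N) * ∑ n : Fin N, (T n) ^ 2)⁻¹) ^ 2|
            ≤ C * ∑ n : Fin N, ∫ x, (ν n x) ^ 2 ∂μ := by
  set c := α * (1 - ε) * ((1 : ℝ) / N)
  have hc : 0 < c := by
    have : (0 : ℝ) < N := by exact_mod_cast hN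
    have : 0 < 1 - ε := by linarith
    positivity
  refine ⟨12 * ρ ^ 2 * c, by positivity, fun Ω _ μ _ ν hmeas hint hmean hsq => ?_⟩
  set u₀ := 1 + c * ∑ n, T n ^ 2
  have hG : Integrable (fun x => (ρ * (1 + c * ∑ n, (T n + ν n x) ^ 2)⁻¹) ^ 2) μ :=
    (integrable_const (ρ ^ 2)).mono' (by fun_prop) (ae_of_all _ fun x => by
      rw [Real.norm_of_nonneg (sq_nonneg _)]
      exact sq_mul_inv_one_add_le ρ (by positivity))
  have hA : Integrable (fun x => ∑ n, T n * ν n x) μ :=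
    integrable_finsetSum _ fun n _ => (hint n).const_mul (T n)
  have hA0 : ∫ x, ∑ n, T n * ν n x ∂μ = 0 := by
    simp [integral_finsetSum _ fun n _ => (hint n).const_mul (T n), integral_const_mul, hmean]
  have hB : Integrable (fun x => ∑ n, ν n x ^ 2) μ := integrable_finsetSum _ fun n _ => hsq n
  rw [← mul_pow, ← integral_finsetSum _ fun n _ => hsq n, ← integral_const_mul]
  refine abs_integral_sub_le_of_abs_sub_add_le hG (hA.const_mul (4 * ρ ^ 2 * c / u₀ ^ 3))
    (by rw [integral_const_mul, hA0, mul_zero]) (hB.const_mul _) fun x => ?_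
  calc _ = |ρ ^ 2 * (((1 + c * ∑ n, (T n + ν n x) ^ 2)⁻¹) ^ 2 - (u₀⁻¹) ^ 2
          + 4 * c * (∑ n, T n * ν n x) / u₀ ^ 3)| := by ring_nf
    _ = ρ ^ 2 * |((1 + c * ∑ n, (T n + ν n x) ^ 2)⁻¹) ^ 2 - (u₀⁻¹) ^ 2
          + 4 * c * (∑ n, T n * ν n x) / u₀ ^ 3| := by rw [abs_mul, abs_sq]
    _ ≤ ρ ^ 2 * (12 * c * ∑ n, ν n x ^ 2) := by
        gcongr; exact abs_inv_one_add_mul_sum_sq_sq_sub_le hc.le T fun n => ν n x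
    _ = 12 * ρ ^ 2 * c * ∑ n, ν n x ^ 2 := by ring

/-- Statistical stability of the second moment of the image: there is `C > 0`, depending
only on `α, ε, N, |ρ₀|`, such that for every probability space and every random vector
`ν = (ν_1, …, ν_N)` with `E[ν_n] = 0` and `E[ν_n²] < ∞`, the image value
`G(ν) = |ρ₀| [1 + α(1−ε)(1/N) Σ_n (T_n + ν_n)²]⁻¹` satisfies
`|E[G(ν)²] − |ρ₀|² I₀²| ≤ C Σ_n E[ν_n²]`, where `I₀ = [1 + α(1−ε)(1/N) Σ_n T_n²]⁻¹`. -/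
theorem second_moment_image_stability
    (N : ℕ) (hN : 1 ≤ N) (α ε ρ : ℝ) (hα : 0 < α) (hε0 : 0 < ε) (hε1 : ε < 1)
    (hρ : 0 < ρ) (T : Fin N → ℝ) :
    ∃ C : ℝ, 0 < C ∧
      ∀ (Ω : Type) (_ : MeasurableSpace Ω) (μ : Measure Ω),
        IsProbabilityMeasure μ →
        ∀ ν : Fin N → Ω → ℝ,
          (∀ n, Measurable (ν n)) →
          (∀ n, Integrable (ν n) μ) →
          (∀ n, ∫ x, ν n x ∂μ = 0) →
          (∀ n, Integrable (fun x => (ν n x) ^ 2) μ) →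
          |(∫ x, (ρ * (1 + α * (1 - ε) * ((1 : ℝ) / N)
                * ∑ n : Fin N, (T n + ν n x) ^ 2)⁻¹) ^ 2 ∂μ)
              - ρ ^ 2 * ((1 + α * (1 - ε) * ((1 : ℝ) / N) * ∑ n : Fin N, (T n) ^ 2)⁻¹) ^ 2|
            ≤ C * ∑ n : Fin N, ∫ x, (ν n x) ^ 2 ∂μ :=
  second_moment_image_stability_general N hN α ε ρ hα hε1 hρ T
end

section
/- Statistical stability of the variance of the image: there exists a constant C > 0, depending only on α, ε, N and |ρ₀|, such that for every probability space and every random vector ν = (ν_1, …, ν_N) with E[ν_n] = 0 and E[ν_n²] < ∞ for all n, the image value G(ν) = |ρ₀| · [1 + α(1−ε)(1/N) Σ_{n=1}^{N} (T_n + ν_n)²]^{−1} satisfies Var[G(ν)] = E[G(ν)²] − (E[G(ν)])² ≤ C Σ_{n=1}^{N} E[ν_n²]. In particular, if E[ν_n²] ≤ σ² for all n, then Var[G(ν)] = O(σ²), so the image is statistically stable when σ²/ε is small. -/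
/-!
The map `w ↦ (1 + c ‖w‖²)⁻¹` is `√c`-Lipschitz, because `t ↦ (1 + t²)⁻¹` is `1`-Lipschitz on `ℝ`.
Hence `G(ν)` differs from the deterministic value `G(0)` by at most `|ρ₀| √c ‖ν‖`, and the variance,
being at most the mean square deviation from any constant, is at most `ρ₀² c Σ E[ν_n²]`,
where `c = α (1 - ε) / N`.
-/

open MeasureTheory ProbabilityTheory

theorem abs_inv_one_add_sq_sub_inv_one_add_sq_le (x y : ℝ) :
    |(1 + x ^ 2)⁻¹ - (1 + y ^ 2)⁻¹| ≤ |x - y| := by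
  have hx : 0 < 1 + x ^ 2 := by positivity
  have hy : 0 < 1 + y ^ 2 := by positivity
  -- from `2 |t| ≤ 1 + t ^ 2` for `t = x, y`
  have hxy : |x + y| ≤ (1 + x ^ 2) * (1 + y ^ 2) := by
    nlinarith [abs_add_le x y, sq_abs x, sq_abs y, sq_nonneg (|x| - 1), sq_nonneg (|y| - 1),
      mul_nonneg (sq_nonneg x) (sq_nonneg y), abs_nonneg x, abs_nonneg y]
  rw [inv_sub_inv hx.ne' hy.ne', abs_div, abs_of_pos (mul_pos hx hy), div_le_iff₀ (mul_pos hx hy),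
    show 1 + y ^ 2 - (1 + x ^ 2) = (y - x) * (y + x) by ring, abs_mul, abs_sub_comm, add_comm y]
  exact mul_le_mul_of_nonneg_left hxy (abs_nonneg _)

theorem abs_inv_one_add_mul_norm_sq_sub_le {E : Type*} [SeminormedAddCommGroup E] {c : ℝ}
    (hc : 0 ≤ c) (w u : E) :
    |(1 + c * ‖w‖ ^ 2)⁻¹ - (1 + c * ‖u‖ ^ 2)⁻¹| ≤ √c * ‖w - u‖ := by
  have hsq : ∀ v : E, c * ‖v‖ ^ 2 = (√c * ‖v‖) ^ 2 := fun v => by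
    rw [mul_pow, Real.sq_sqrt hc]
  calc |(1 + c * ‖w‖ ^ 2)⁻¹ - (1 + c * ‖u‖ ^ 2)⁻¹| ≤ |√c * ‖w‖ - √c * ‖u‖| := by
        rw [hsq, hsq]; exact abs_inv_one_add_sq_sub_inv_one_add_sq_le _ _
    _ = √c * |‖w‖ - ‖u‖| := by rw [← mul_sub, abs_mul, abs_of_nonneg (Real.sqrt_nonneg c)]
    _ ≤ √c * ‖w - u‖ := mul_le_mul_of_nonneg_left (abs_norm_sub_norm_le w u) (Real.sqrt_nonneg c)

theorem sq_mul_inv_one_add_sum_sq_sub_le {ι : Type*} [Fintype ι] {c : ℝ} (hc : 0 ≤ c)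
    (ρ : ℝ) (T v : ι → ℝ) :
    (ρ * (1 + c * ∑ i, (T i + v i) ^ 2)⁻¹ - ρ * (1 + c * ∑ i, T i ^ 2)⁻¹) ^ 2
      ≤ ρ ^ 2 * c * ∑ i, v i ^ 2 := by
  have key := abs_inv_one_add_mul_norm_sq_sub_le hc
    (WithLp.toLp 2 (T + v) : EuclideanSpace ℝ ι) (WithLp.toLp 2 T)
  rw [← WithLp.toLp_sub, add_sub_cancel_left] at key
  have hnorm : ∀ w : ι → ℝ, ‖(WithLp.toLp 2 w : EuclideanSpace ℝ ι)‖ ^ 2 = ∑ i, w i ^ 2 :=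
    fun w => EuclideanSpace.real_norm_sq_eq _
  simp only [hnorm, Pi.add_apply] at key
  calc _ = ρ ^ 2 * |(1 + c * ∑ i, (T i + v i) ^ 2)⁻¹ - (1 + c * ∑ i, T i ^ 2)⁻¹| ^ 2 := by
        rw [sq_abs, ← mul_sub, mul_pow]
    _ ≤ ρ ^ 2 * (√c * ‖(WithLp.toLp 2 v : EuclideanSpace ℝ ι)‖) ^ 2 := by gcongr
    _ = ρ ^ 2 * c * ∑ i, v i ^ 2 := by rw [mul_pow, Real.sq_sqrt hc, hnorm, mul_assoc]

theorem integral_sq_sub_sq_integral_le {Ω : Type*} [MeasurableSpace Ω] {μ : Measure Ω}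
    [IsProbabilityMeasure μ] {X : Ω → ℝ} (hX : MemLp X 2 μ) (a : ℝ) :
    ∫ ω, X ω ^ 2 ∂μ - (∫ ω, X ω ∂μ) ^ 2 ≤ ∫ ω, (X ω - a) ^ 2 ∂μ := by
  have hX_meas := hX.aestronglyMeasurable
  have h := variance_le_expectation_sq (X := fun ω => X ω - a)
    (hX_meas.sub aestronglyMeasurable_const)
  rw [variance_sub_const hX_meas, variance_eq_sub hX] at h
  exact h

theorem variance_image_stability_general
    (N : ℕ) (hN : 1 ≤ N) (α ε ρ : ℝ) (hα : 0 < α) (hε1 : ε < 1)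
    (hρ : 0 < ρ) (T : Fin N → ℝ) :
    ∃ C : ℝ, 0 < C ∧
      ∀ (Ω : Type) (_ : MeasurableSpace Ω) (μ : Measure Ω),
        IsProbabilityMeasure μ →
        ∀ ν : Fin N → Ω → ℝ,
          (∀ n, Measurable (ν n)) →
          (∀ n, Integrable (ν n) μ) →
          (∀ n, ∫ x, ν n x ∂μ = 0) →
          (∀ n, Integrable (fun x => (ν n x) ^ 2) μ) →
          (∫ x, (ρ * (1 + α * (1 - ε) * ((1 : ℝ) / N)
                * ∑ n : Fin N, (T n + ν n x) ^ 2)⁻¹) ^ 2 ∂μ)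
              - (∫ x, ρ * (1 + α * (1 - ε) * ((1 : ℝ) / N)
                * ∑ n : Fin N, (T n + ν n x) ^ 2)⁻¹ ∂μ) ^ 2
            ≤ C * ∑ n : Fin N, ∫ x, (ν n x) ^ 2 ∂μ := by
  set c := α * (1 - ε) * ((1 : ℝ) / N)
  have hc : 0 < c := by
    have : (0 : ℝ) < N := by exact_mod_cast hN
    have : 0 < 1 - ε := sub_pos.mpr hε1
    positivity
  refine ⟨ρ ^ 2 * c, by positivity, fun Ω _ μ _ ν hν _ _ hν2 => ?_⟩
  set G := fun x => ρ * (1 + c * ∑ n, (T n + ν n x) ^ 2)⁻¹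
  have hG_le : ∀ x, ‖G x‖ ≤ ρ := fun x => by
    have h1 : 1 ≤ 1 + c * ∑ n, (T n + ν n x) ^ 2 := le_add_of_nonneg_right (by positivity)
    rw [Real.norm_of_nonneg (by positivity)]
    exact mul_le_of_le_one_right hρ.le (inv_le_one_of_one_le₀ h1)
  have hG : MemLp G 2 μ := MemLp.of_bound (by fun_prop) ρ (ae_of_all _ hG_le)
  have hν2_sum : Integrable (fun x => ∑ n, ν n x ^ 2) μ := integrable_finsetSum _ fun n _ => hν2 n
  calc _ ≤ ∫ x, (G x - ρ * (1 + c * ∑ n, T n ^ 2)⁻¹) ^ 2 ∂μ :=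
        integral_sq_sub_sq_integral_le hG _
    _ ≤ ∫ x, ρ ^ 2 * c * ∑ n, ν n x ^ 2 ∂μ :=
        integral_mono_of_nonneg (ae_of_all _ fun _ => sq_nonneg _) (hν2_sum.const_mul _)
          (ae_of_all _ fun x => sq_mul_inv_one_add_sum_sq_sub_le hc.le ρ T fun n => ν n x)
    _ = ρ ^ 2 * c * ∑ n, ∫ x, ν n x ^ 2 ∂μ := by
        rw [integral_const_mul, integral_finsetSum _ fun n _ => hν2 n]

/-- Statistical stability of the variance of the image: there is `C > 0`, depending only on
`α, ε, N, |ρ₀|`, such that for every probability space and every random vector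
`ν = (ν_1, …, ν_N)` with `E[ν_n] = 0` and `E[ν_n²] < ∞`, the image value
`G(ν) = |ρ₀| [1 + α(1−ε)(1/N) Σ_n (T_n + ν_n)²]⁻¹` satisfies
`Var[G(ν)] = E[G(ν)²] − (E[G(ν)])² ≤ C Σ_n E[ν_n²]`. -/
theorem variance_image_stability
    (N : ℕ) (hN : 1 ≤ N) (α ε ρ : ℝ) (hα : 0 < α) (hε0 : 0 < ε) (hε1 : ε < 1)
    (hρ : 0 < ρ) (T : Fin N → ℝ) :
    ∃ C : ℝ, 0 < C ∧
      ∀ (Ω : Type) (_ : MeasurableSpace Ω) (μ : Measure Ω),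
        IsProbabilityMeasure μ →
        ∀ ν : Fin N → Ω → ℝ,
          (∀ n, Measurable (ν n)) →
          (∀ n, Integrable (ν n) μ) →
          (∀ n, ∫ x, ν n x ∂μ = 0) →
          (∀ n, Integrable (fun x => (ν n x) ^ 2) μ) →
          (∫ x, (ρ * (1 + α * (1 - ε) * ((1 : ℝ) / N)
                * ∑ n : Fin N, (T n + ν n x) ^ 2)⁻¹) ^ 2 ∂μ)
              - (∫ x, ρ * (1 + α * (1 - ε) * ((1 : ℝ) / N)
                * ∑ n : Fin N, (T n + ν n x) ^ 2)⁻¹ ∂μ) ^ 2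
            ≤ C * ∑ n : Fin N, ∫ x, (ν n x) ^ 2 ∂μ :=
  variance_image_stability_general N hN α ε ρ hα hε1 hρ T
end
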